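/- arXiv:1103.3118 — 2 statements merged into one kernel-verified Lean document; each statement's English description precedes it below -/
import Mathlib

section
/- Let g be an invertible symmetric real 4×4 matrix, let κ = *_g be its Hodge star medium tensor, and let ξ ∈ ℝ⁴ be a nonzero covector with g(ξ,ξ) = 0. Then the kernel of the linear map L_ξ : α ↦ ξ ∧ κ(ξ∧α) equals the g-orthogonal complement of ξ: ker L_ξ = {α ∈ ℝ⁴ : g(α,ξ) = 0}. -/
open scoped BigOperators
open Matrix

noncomputable section

/-- The Levi-Civita symbol `ε_{ijkl}` on `{0,1,2,3}`. -/
def eps4 (i j k l : Fin 4) : ℝ :=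
  (((j.val : ℝ) - (i.val : ℝ)) * ((k.val : ℝ) - (i.val : ℝ)) * ((l.val : ℝ) - (i.val : ℝ)) *
      ((k.val : ℝ) - (j.val : ℝ)) * ((l.val : ℝ) - (j.val : ℝ)) * ((l.val : ℝ) - (k.val : ℝ))) / 12

/-- A 2-form on ℝ⁴: an antisymmetric array of components. -/
def IsAlt (u : Fin 4 → Fin 4 → ℝ) : Prop := ∀ i j, u i j = - u j i

/-- The components `κ i j k l = κ^{ij}_{kl}` form a medium tensor: antisymmetry in the
upper pair and in the lower pair. -/
def IsMedium (κ : Fin 4 → Fin 4 → Fin 4 → Fin 4 → ℝ) : Prop :=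
  (∀ i j k l, κ i j k l = - κ j i k l) ∧ (∀ i j k l, κ i j k l = - κ i j l k)

/-- Action of a medium tensor on a 2-form: `(κ F)_{ij} = ½ κ^{rs}_{ij} F_{rs}`. -/
def act (κ : Fin 4 → Fin 4 → Fin 4 → Fin 4 → ℝ) (F : Fin 4 → Fin 4 → ℝ) (i j : Fin 4) : ℝ :=
  (1 / 2) * ∑ r, ∑ s, κ r s i j * F r s

/-- Wedge pairing of two 2-forms: `u ∧ v = ¼ ε^{ijkl} u_{ij} v_{kl}`. -/
def wedge2 (u v : Fin 4 → Fin 4 → ℝ) : ℝ :=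
  (1 / 4) * ∑ i, ∑ j, ∑ k, ∑ l, eps4 i j k l * u i j * v k l

/-- A medium tensor is skewon-free if `u ∧ κ(v) = κ(u) ∧ v` for all 2-forms `u, v`. -/
def SkewonFree (κ : Fin 4 → Fin 4 → Fin 4 → Fin 4 → ℝ) : Prop :=
  ∀ u v, IsAlt u → IsAlt v → wedge2 u (act κ v) = wedge2 (act κ u) v

/-- Trace of a medium tensor: `½ κ^{ij}_{ij}`. -/
def mtrace (κ : Fin 4 → Fin 4 → Fin 4 → Fin 4 → ℝ) : ℝ := (1 / 2) * ∑ i, ∑ j, κ i j i j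

/-- The (unsymmetrised) Tamm-Rubilar tensor density `𝒢₀^{ijkl}`. -/
def TR0 (κ : Fin 4 → Fin 4 → Fin 4 → Fin 4 → ℝ) (i j k l : Fin 4) : ℝ :=
  (1 / 48) * ∑ a₁, ∑ a₂, ∑ a₃, ∑ a₄, ∑ b₁, ∑ b₂, ∑ b₃, ∑ b₄, ∑ b₅, ∑ b₆,
    κ a₁ a₂ b₁ b₂ * κ a₃ i b₃ b₄ * κ a₄ j b₅ b₆ *
      eps4 b₁ b₂ b₅ k * eps4 b₃ b₄ b₆ l * eps4 a₁ a₂ a₃ a₄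

/-- The Tamm-Rubilar quartic form `𝒢_κ(ξ) = 𝒢₀^{ijkl} ξ_i ξ_j ξ_k ξ_l`. -/
def TR (κ : Fin 4 → Fin 4 → Fin 4 → Fin 4 → ℝ) (ξ : Fin 4 → ℝ) : ℝ :=
  ∑ i, ∑ j, ∑ k, ∑ l, TR0 κ i j k l * ξ i * ξ j * ξ k * ξ l

/-- The Hodge star medium tensor of an invertible symmetric 4×4 matrix:
`(*_g)^{ij}_{rs} = √|det g| g^{ia} g^{jb} ε_{abrs}`. -/
def hodge (g : Matrix (Fin 4) (Fin 4) ℝ) (i j r s : Fin 4) : ℝ :=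
  Real.sqrt |g.det| * ∑ a, ∑ b, g⁻¹ i a * g⁻¹ j b * eps4 a b r s

/-- Lorentzian signature `(+---)` or `(-+++)` for a symmetric real 4×4 matrix. -/
def IsLorentzian (g : Matrix (Fin 4) (Fin 4) ℝ) : Prop :=
  ∃ P : Matrix (Fin 4) (Fin 4) ℝ, IsUnit P.det ∧
    (Pᵀ * g * P = Matrix.diagonal ![1, -1, -1, -1] ∨
      Pᵀ * g * P = Matrix.diagonal ![-1, 1, 1, 1])

/-- The 2-form `ξ ∧ α` of two covectors. -/
def wcov (ξ α : Fin 4 → ℝ) (i j : Fin 4) : ℝ := ξ i * α j - ξ j * α i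

/-- The 3-form `L_ξ(α) = ξ ∧ κ(ξ ∧ α)`. -/
def Lfun (κ : Fin 4 → Fin 4 → Fin 4 → Fin 4 → ℝ) (ξ α : Fin 4 → ℝ) (i j k : Fin 4) : ℝ :=
  ξ i * act κ (wcov ξ α) j k + ξ j * act κ (wcov ξ α) k i + ξ k * act κ (wcov ξ α) i j

/-- The metric evaluated on covectors: `g(ξ,η) = g^{ij} ξ_i η_j` (inverse matrix entries). -/
def gform (g : Matrix (Fin 4) (Fin 4) ℝ) (ξ η : Fin 4 → ℝ) : ℝ :=
  ∑ i, ∑ j, g⁻¹ i j * ξ i * η j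

/-!
Write `U = ξ g⁻¹` and `V = α g⁻¹` for the raised covectors, so that `κ(ξ ∧ α) = √|det g| ⋆(U ∧ V)`
with `⋆` the contraction against the Levi-Civita symbol. The Schouten identity (antisymmetrising
over five indices in dimension four gives zero) turns `ξ ∧ ⋆(U ∧ V)` into
`g(α,ξ) ⋆U - g(ξ,ξ) ⋆V`. For null `ξ` only the first term survives, and `⋆U` vanishes only
when `U = 0`, i.e. `ξ = 0`.
-/

open Matrix

/-- `12 ε_{ijkl}`, integer-valued so that identities between Levi-Civita symbols can be
checked by `decide`. -/
def leviProd (i j k l : Fin 4) : ℤ :=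
  ((j : ℤ) - i) * ((k : ℤ) - i) * ((l : ℤ) - i) * ((k : ℤ) - j) * ((l : ℤ) - j) * ((l : ℤ) - k)

lemma eps4_eq_leviProd (i j k l : Fin 4) : eps4 i j k l = leviProd i j k l / 12 := by
  simp only [eps4, leviProd]
  push_cast
  rfl

lemma eps4_swap (a b r s : Fin 4) : eps4 b a r s = -eps4 a b r s := by
  simp only [eps4]
  ring

lemma leviProd_schouten : ∀ a b c i j k : Fin 4,
    (if c = i then leviProd a b j k else 0) + (if c = j then leviProd a b k i else 0)
      + (if c = k then leviProd a b i j else 0)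
      = (if b = c then leviProd a i j k else 0) - (if a = c then leviProd b i j k else 0) := by
  decide +kernel

lemma eps4_schouten (w : Fin 4 → ℝ) (a b i j k : Fin 4) :
    w i * eps4 a b j k + w j * eps4 a b k i + w k * eps4 a b i j
      = w b * eps4 a i j k - w a * eps4 b i j k := by
  simp only [eps4_eq_leviProd]
  calc _ = ∑ c, w c * ((if c = i then leviProd a b j k else 0)
        + (if c = j then leviProd a b k i else 0) + (if c = k then leviProd a b i j else 0) : ℤ)
          / 12 := by
        push_cast
        simp [mul_add, add_div, Finset.sum_add_distrib, mul_ite, ite_div, Finset.sum_ite_eq',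
          mul_div_assoc]
    _ = ∑ c, w c * ((if b = c then leviProd a i j k else 0)
        - (if a = c then leviProd b i j k else 0) : ℤ) / 12 := by
        simp only [leviProd_schouten]
    _ = _ := by
        push_cast
        simp [mul_sub, sub_div, Finset.sum_sub_distrib, mul_ite, ite_div, Finset.sum_ite_eq,
          mul_div_assoc]

def dualBivector (u v : Fin 4 → ℝ) (j k : Fin 4) : ℝ := ∑ a, ∑ b, eps4 a b j k * u a * v b

def dualVector (u : Fin 4 → ℝ) (i j k : Fin 4) : ℝ := ∑ a, eps4 a i j k * u a

lemma cyclic_mul_dualBivector (u v w : Fin 4 → ℝ) (i j k : Fin 4) :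
    w i * dualBivector u v j k + w j * dualBivector u v k i + w k * dualBivector u v i j
      = (v ⬝ᵥ w) * dualVector u i j k - (u ⬝ᵥ w) * dualVector v i j k := by
  calc _ = ∑ a, ∑ b, u a * v b *
        (w i * eps4 a b j k + w j * eps4 a b k i + w k * eps4 a b i j) := by
        simp only [dualBivector, Finset.mul_sum, ← Finset.sum_add_distrib]
        exact Finset.sum_congr rfl fun _ _ => Finset.sum_congr rfl fun _ _ => by ring
    _ = ∑ a, ∑ b, u a * v b * (w b * eps4 a i j k - w a * eps4 b i j k) := by
        simp only [eps4_schouten]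
    _ = _ := by
        simp only [dualVector, dotProduct, mul_sub, Finset.sum_sub_distrib, Finset.sum_mul,
          Finset.mul_sum]
        rw [Finset.sum_comm (f := fun a b => u a * v b * (w a * eps4 b i j k))]
        congr 1 <;>
          exact Finset.sum_congr rfl fun _ _ => Finset.sum_congr rfl fun _ _ => by ring

lemma eq_zero_of_dualVector_eq_zero {u : Fin 4 → ℝ} (h : ∀ i j k, dualVector u i j k = 0) :
    u = 0 := by
  have h0 := h 1 2 3
  have h1 := h 0 2 3
  have h2 := h 0 1 3
  have h3 := h 0 1 2
  norm_num [dualVector, Fin.sum_univ_four, eps4_eq_leviProd, leviProd] at h0 h1 h2 h3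
  ext a
  fin_cases a <;> assumption

lemma act_wcov {κ : Fin 4 → Fin 4 → Fin 4 → Fin 4 → ℝ} (hκ : ∀ r s j k, κ s r j k = -κ r s j k)
    (ξ α : Fin 4 → ℝ) (j k : Fin 4) :
    act κ (wcov ξ α) j k = ∑ r, ∑ s, κ r s j k * (ξ r * α s) := by
  have hswap : ∑ r, ∑ s, κ r s j k * (ξ s * α r) = -∑ r, ∑ s, κ r s j k * (ξ r * α s) := by
    rw [Finset.sum_comm, ← Finset.sum_neg_distrib]
    exact Finset.sum_congr rfl fun _ _ => by
      rw [← Finset.sum_neg_distrib]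
      exact Finset.sum_congr rfl fun _ _ => by rw [hκ]; ring
  simp only [act, wcov, mul_sub, Finset.sum_sub_distrib, hswap]
  ring

lemma hodge_swap (g : Matrix (Fin 4) (Fin 4) ℝ) (r s j k : Fin 4) :
    hodge g s r j k = -hodge g r s j k := by
  simp only [hodge, ← mul_neg, ← Finset.sum_neg_distrib]
  rw [Finset.sum_comm]
  congr 1
  exact Finset.sum_congr rfl fun _ _ => Finset.sum_congr rfl fun _ _ => by rw [eps4_swap]; ring

lemma act_hodge_wcov (g : Matrix (Fin 4) (Fin 4) ℝ) (ξ α : Fin 4 → ℝ) (j k : Fin 4) :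
    act (hodge g) (wcov ξ α) j k = √|g.det| * dualBivector (ξ ᵥ* g⁻¹) (α ᵥ* g⁻¹) j k := by
  rw [act_wcov (hodge_swap g)]
  simp only [hodge, dualBivector, vecMul, dotProduct, Finset.mul_sum, Finset.sum_mul]
  calc _ = ∑ r, ∑ a, ∑ b, ∑ s, √|g.det| * (g⁻¹ r a * g⁻¹ s b * eps4 a b j k) * (ξ r * α s) :=
        Finset.sum_congr rfl fun _ _ => Finset.sum_comm_cycle.symm
    _ = _ := by
      rw [← Finset.sum_comm_cycle]
      refine Finset.sum_congr rfl fun _ _ => Finset.sum_congr rfl fun _ _ => ?_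
      rw [Finset.sum_comm]
      exact Finset.sum_congr rfl fun _ _ => Finset.sum_congr rfl fun _ _ => by ring

lemma gform_eq_vecMul_dotProduct (g : Matrix (Fin 4) (Fin 4) ℝ) (α ξ : Fin 4 → ℝ) :
    gform g α ξ = α ᵥ* g⁻¹ ⬝ᵥ ξ := by
  simp only [gform, vecMul, dotProduct, Finset.sum_mul]
  rw [Finset.sum_comm]
  exact Finset.sum_congr rfl fun _ _ => Finset.sum_congr rfl fun _ _ => by ring

lemma lfun_hodge (g : Matrix (Fin 4) (Fin 4) ℝ) (ξ α : Fin 4 → ℝ) (i j k : Fin 4) :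
    Lfun (hodge g) ξ α i j k = √|g.det| *
      (gform g α ξ * dualVector (ξ ᵥ* g⁻¹) i j k - gform g ξ ξ * dualVector (α ᵥ* g⁻¹) i j k) := by
  simp only [Lfun, act_hodge_wcov, gform_eq_vecMul_dotProduct]
  linear_combination √|g.det| * cyclic_mul_dualBivector (ξ ᵥ* g⁻¹) (α ᵥ* g⁻¹) ξ i j k

theorem hodge_kernel_eq_orthogonal_complement_general
    (g : Matrix (Fin 4) (Fin 4) ℝ) (hdet : IsUnit g.det)
    (ξ : Fin 4 → ℝ) (hξ : ξ ≠ 0) (hnull : gform g ξ ξ = 0) :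
    {α : Fin 4 → ℝ | ∀ i j k, Lfun (hodge g) ξ α i j k = 0} =
      {α : Fin 4 → ℝ | gform g α ξ = 0} := by
  have hsqrt : √|g.det| ≠ 0 := by simpa using hdet.ne_zero
  ext α
  simp only [Set.mem_ofPred_eq, lfun_hodge, hnull, zero_mul, sub_zero, mul_eq_zero, hsqrt,
    false_or]
  refine ⟨fun h => ?_, fun h i j k => Or.inl h⟩
  by_contra hα
  have hraised : ξ ᵥ* g⁻¹ = 0 :=
    eq_zero_of_dualVector_eq_zero fun i j k => (h i j k).resolve_left hα
  exact hξ (eq_zero_of_vecMul_eq_zero (isUnit_nonsing_inv_det g hdet).ne_zero hraised)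

/-- For the Hodge star medium tensor `κ = *_g` of an invertible symmetric `g`
and a nonzero null covector `ξ` (i.e. `g(ξ,ξ) = 0`), the kernel of
`L_ξ : α ↦ ξ ∧ κ(ξ ∧ α)` is the `g`-orthogonal complement of `ξ`. -/
theorem hodge_kernel_eq_orthogonal_complement
    (g : Matrix (Fin 4) (Fin 4) ℝ) (hsymm : g.IsSymm) (hdet : IsUnit g.det)
    (ξ : Fin 4 → ℝ) (hξ : ξ ≠ 0) (hnull : gform g ξ ξ = 0) :
    {α : Fin 4 → ℝ | ∀ i j k, Lfun (hodge g) ξ α i j k = 0} =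
      {α : Fin 4 → ℝ | gform g α ξ = 0} :=
  hodge_kernel_eq_orthogonal_complement_general g hdet ξ hξ hnull

end
end

section
/- Let κ be a skewon-free medium tensor on ℝ⁴ with κ ∘ κ = −Id on 2-forms, and let 𝒜 be its associated 3×3 matrix. Then 𝒜 ≠ 0 and rank 𝒜 ≠ 2; that is, the rank of 𝒜 is either 1 or 3. Equivalently: for real 3×3 matrices 𝒜 = 𝒜ᵀ, ℬ = ℬᵀ and 𝒞 satisfying 𝒞² + 𝒜ℬ = −Id₃, ℬ𝒞 + 𝒞ᵀℬ = 0 and 𝒞𝒜 + 𝒜𝒞ᵀ = 0, the matrix 𝒜 is neither zero nor of rank 2. -/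
open scoped BigOperators
open Matrix

noncomputable section

/-- The Levi-Civita symbol `ε_{1+r,1+a,1+b}` on the spatial indices `{1,2,3}`,
reindexed by `Fin 3`. -/
def eps3 (i j k : Fin 3) : ℝ :=
  (((j.val : ℝ) - (i.val : ℝ)) * ((k.val : ℝ) - (i.val : ℝ)) *
      ((k.val : ℝ) - (j.val : ℝ))) / 2

/-- The 3×3 matrix `𝒜`: `𝒜^{ri} = -½ ε^{iab} κ^{r0}_{ab}` (spatial indices). -/
def matA (κ : Fin 4 → Fin 4 → Fin 4 → Fin 4 → ℝ) : Matrix (Fin 3) (Fin 3) ℝ :=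
  Matrix.of fun r i => -(1 / 2) * ∑ a, ∑ b, eps3 i a b * κ r.succ 0 a.succ b.succ

/-- The 3×3 matrix `ℬ`: `ℬ_{ri} = -½ ε_{rab} κ^{ab}_{i0}` (spatial indices). -/
def matB (κ : Fin 4 → Fin 4 → Fin 4 → Fin 4 → ℝ) : Matrix (Fin 3) (Fin 3) ℝ :=
  Matrix.of fun r i => -(1 / 2) * ∑ a, ∑ b, eps3 r a b * κ a.succ b.succ i.succ 0

/-- The 3×3 matrix `𝒞`: `𝒞^r_i = κ^{r0}_{i0}` (spatial indices). -/
def matC (κ : Fin 4 → Fin 4 → Fin 4 → Fin 4 → ℝ) : Matrix (Fin 3) (Fin 3) ℝ :=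
  Matrix.of fun r i => κ r.succ 0 i.succ 0

/-- The 3×3 matrix `𝒟`: `𝒟_r^i = ¼ ε_{rmn} ε^{iab} κ^{mn}_{ab}` (spatial indices). -/
def matD (κ : Fin 4 → Fin 4 → Fin 4 → Fin 4 → ℝ) : Matrix (Fin 3) (Fin 3) ℝ :=
  Matrix.of fun r i =>
    (1 / 4) * ∑ m, ∑ n, ∑ a, ∑ b, eps3 r m n * eps3 i a b * κ m.succ n.succ a.succ b.succ

/-!
Composing media multiplies their block matrices `[[𝒞, 𝒜], [ℬ, 𝒟]]` (the spatial part of the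
contraction is an `ε`–`ε` identity), and skewon-freeness forces `𝒟 = 𝒞ᵀ`. So `κ ∘ κ = -1` gives
`𝒞² + 𝒜ℬ = -1` and `𝒞𝒜 + 𝒜𝒞ᵀ = 0`. After transposing, `ker 𝒜ᵀ` is invariant under `𝒞ᵀ`, which
squares to `-1` on it; since a determinant squared is `≥ 0` while `det (-1) = (-1) ^ dim`, this
kernel has even dimension `3 - rank 𝒜`, i.e. `rank 𝒜 ∈ {1, 3}`.
-/

section LinearAlgebra

variable {K : Type*} [Field K] [LinearOrder K] [IsStrictOrderedRing K]

open Module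

theorem Module.End.even_finrank_of_mul_self_eq_neg_one {V : Type*} [AddCommGroup V] [Module K V]
    [FiniteDimensional K V] {f : Module.End K V} (hf : f * f = -1) : Even (finrank K V) := by
  by_contra hodd
  have hdet : LinearMap.det f * LinearMap.det f = -1 := by
    rw [← map_mul, hf, ← neg_one_smul K (1 : Module.End K V), LinearMap.det_smul, map_one,
      mul_one, (Nat.not_even_iff_odd.mp hodd).neg_one_pow]
  nlinarith [mul_self_nonneg (LinearMap.det f)]

theorem Module.End.even_finrank_ker {V : Type*} [AddCommGroup V] [Module K V]
    [FiniteDimensional K V] {x y z w : Module.End K V} (hsq : y * y + z * x = -1)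
    (hxy : x * y = w * x) :
    Even (finrank K (LinearMap.ker x)) := by
  have hinv : ∀ v ∈ LinearMap.ker x, y v ∈ LinearMap.ker x := fun v hv => by
    rw [LinearMap.mem_ker] at hv ⊢
    rw [← Module.End.mul_apply, hxy, Module.End.mul_apply, hv, map_zero]
  apply Module.End.even_finrank_of_mul_self_eq_neg_one (f := y.restrict hinv)
  ext ⟨v, hv⟩
  have := congr($hsq v)
  rw [LinearMap.mem_ker] at hv
  simp only [LinearMap.add_apply, Module.End.mul_apply, hv, map_zero, add_zero] at this
  simpa [LinearMap.restrict_apply] using this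

theorem Matrix.even_card_sub_rank {n : Type*} [Fintype n] [DecidableEq n] {A B C : Matrix n n K}
    (hsq : C * C + A * B = -1) (hCA : C * A + A * Cᵀ = 0) : Even (Fintype.card n - A.rank) := by
  have hsqT : Cᵀ * Cᵀ + Bᵀ * Aᵀ = -1 := by
    rw [← transpose_mul, ← transpose_mul, ← transpose_add, hsq, transpose_neg, transpose_one]
  have hCAT : Aᵀ * Cᵀ = -C * Aᵀ := by
    rw [← transpose_mul, eq_neg_of_add_eq_zero_left hCA, transpose_neg, transpose_mul,
      transpose_transpose, neg_mul]
  have hker := Module.End.even_finrank_ker (x := toLinAlgEquiv' Aᵀ) (y := toLinAlgEquiv' Cᵀ)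
    (z := toLinAlgEquiv' Bᵀ) (w := toLinAlgEquiv' (-C))
    (by rw [← map_mul, ← map_mul, ← map_add, hsqT, map_neg, map_one])
    (by rw [← map_mul, ← map_mul, hCAT])
  have := LinearMap.finrank_range_add_finrank_ker Aᵀ.mulVecLin
  rw [← rank, rank_transpose, Module.finrank_fintype_fun_eq_card] at this
  rw [← this, Nat.add_sub_cancel_left]
  exact hker

theorem Matrix.ne_zero_and_rank_ne_two {A B C : Matrix (Fin 3) (Fin 3) K}
    (hsq : C * C + A * B = -1) (hCA : C * A + A * Cᵀ = 0) : A ≠ 0 ∧ A.rank ≠ 2 := by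
  have h := Matrix.even_card_sub_rank hsq hCA
  rw [Fintype.card_fin] at h
  refine ⟨?_, fun h2 => ?_⟩
  · rintro rfl
    rw [Matrix.rank_zero] at h
    exact absurd h (by decide)
  · rw [h2] at h
    exact absurd h (by decide)

end LinearAlgebra

theorem eps4_swap_left (i j k l : Fin 4) : eps4 j i k l = -eps4 i j k l := by
  unfold eps4; ring

theorem eps4_swap_right (i j k l : Fin 4) : eps4 i j l k = -eps4 i j k l := by
  unfold eps4; ring

theorem eps4_swap_pairs (i j k l : Fin 4) : eps4 k l i j = eps4 i j k l := by
  unfold eps4; ring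

theorem eps4_zero_succ (a b c : Fin 3) : eps4 0 a.succ b.succ c.succ = eps3 a b c := by
  fin_cases a <;> fin_cases b <;> fin_cases c <;> norm_num [eps4, eps3]

theorem eps4_succ_succ_succ_succ (a b c d : Fin 3) :
    eps4 a.succ b.succ c.succ d.succ = 0 := by
  fin_cases a <;> fin_cases b <;> fin_cases c <;> fin_cases d <;> norm_num [eps4]

theorem eps3_cyclic (a b c : Fin 3) : eps3 b c a = eps3 a b c := by
  unfold eps3; ring

theorem eps4_succ_zero_succ_succ (i a b : Fin 3) :
    eps4 i.succ 0 a.succ b.succ = -eps3 i a b := by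
  rw [eps4_swap_left, eps4_zero_succ]

theorem eps4_succ_succ_succ_zero (m n k : Fin 3) :
    eps4 m.succ n.succ k.succ 0 = -eps3 m n k := by
  rw [← eps4_swap_pairs, eps4_swap_left, eps4_zero_succ, ← eps3_cyclic]

theorem sum_sum_comm_pairs {α β M : Type*} [Fintype α] [Fintype β] [AddCommMonoid M]
    (f : α → β → α → β → M) :
    ∑ a, ∑ b, ∑ c, ∑ d, f a b c d = ∑ c, ∑ d, ∑ a, ∑ b, f a b c d := by
  calc ∑ a, ∑ b, ∑ c, ∑ d, f a b c d = ∑ x : α × β, ∑ y : α × β, f x.1 x.2 y.1 y.2 := by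
        simp only [Fintype.sum_prod_type]
    _ = ∑ y : α × β, ∑ x : α × β, f x.1 x.2 y.1 y.2 := Finset.sum_comm
    _ = ∑ c, ∑ d, ∑ a, ∑ b, f a b c d := by simp only [Fintype.sum_prod_type]

theorem sum_fin_four_mul_of_isAlt {u v : Fin 4 → Fin 4 → ℝ} (hu : IsAlt u) (hv : IsAlt v) :
    ∑ x, ∑ y, u x y * v x y =
      2 * ∑ m : Fin 3, u m.succ 0 * v m.succ 0 +
        ∑ a : Fin 3, ∑ b : Fin 3, u a.succ b.succ * v a.succ b.succ := by
  have hu0 : u 0 0 = 0 := by linarith [hu 0 0]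
  simp only [Fin.sum_univ_succ (n := 3), hu0, zero_mul, zero_add, Finset.sum_add_distrib]
  have : ∀ m : Fin 3, u 0 m.succ * v 0 m.succ = u m.succ 0 * v m.succ 0 := fun m => by
    rw [hu 0, hv 0]; ring
  simp only [this]
  ring

theorem sum_dual_mul_dual {u v : Fin 3 → Fin 3 → ℝ} (hu : ∀ a b, u a b = -u b a)
    (hv : ∀ a b, v a b = -v b a) :
    ∑ m, (∑ a, ∑ b, eps3 m a b * u a b) * (∑ c, ∑ d, eps3 m c d * v c d) =
      2 * ∑ a, ∑ b, u a b * v a b := by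
  have hu' : ∀ a, u a a = 0 := fun a => by linarith [hu a a]
  have hv' : ∀ a, v a a = 0 := fun a => by linarith [hv a a]
  simp only [Fin.sum_univ_three, eps3, hu', hv', hu 1 0, hu 2 0, hu 2 1, hv 1 0, hv 2 0, hv 2 1]
  norm_num
  ring

def basisForm (p q : Fin 4) : Fin 4 → Fin 4 → ℝ := fun i j =>
  (if i = p ∧ j = q then 1 else 0) - (if i = q ∧ j = p then 1 else 0)

theorem isAlt_basisForm (p q : Fin 4) : IsAlt (basisForm p q) := by
  intro i j
  simp only [basisForm, and_comm]
  ring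

theorem sum_sum_basisForm_mul (p q : Fin 4) (f : Fin 4 → Fin 4 → ℝ) :
    ∑ i, ∑ j, basisForm p q i j * f i j = f p q - f q p := by
  simp only [basisForm, sub_mul, one_mul, zero_mul, ite_mul, ite_and, Finset.sum_sub_distrib,
    Finset.sum_ite_irrel, Finset.sum_ite_eq', Finset.sum_const_zero, Finset.mem_univ, if_true]

theorem wedge2_comm (u v : Fin 4 → Fin 4 → ℝ) : wedge2 u v = wedge2 v u := by
  unfold wedge2
  rw [sum_sum_comm_pairs]
  simp only [eps4_swap_pairs, mul_right_comm]

theorem wedge2_basisForm (p q : Fin 4) (v : Fin 4 → Fin 4 → ℝ) :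
    wedge2 (basisForm p q) v = (1 / 2) * ∑ c, ∑ d, eps4 p q c d * v c d := by
  have : ∀ i j, ∑ k, ∑ l, eps4 i j k l * basisForm p q i j * v k l
      = basisForm p q i j * ∑ k, ∑ l, eps4 i j k l * v k l := fun i j => by
    simp only [Finset.mul_sum]
    exact Finset.sum_congr rfl fun k _ => Finset.sum_congr rfl fun l _ => by ring
  simp only [wedge2, this, sum_sum_basisForm_mul, eps4_swap_left q p, neg_mul,
    Finset.sum_neg_distrib]
  ring

section MediumTensor

variable {κ η : Fin 4 → Fin 4 → Fin 4 → Fin 4 → ℝ}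

theorem act_basisForm (hκ : IsMedium κ) (p q : Fin 4) : act κ (basisForm p q) = κ p q := by
  ext i j
  rw [act, Finset.sum_congr rfl fun r _ => Finset.sum_congr rfl fun s _ => mul_comm _ _,
    sum_sum_basisForm_mul, hκ.1 q p]
  ring

theorem SkewonFree.sum_eps4_mul_comm (hκ : IsMedium κ) (hs : SkewonFree κ) (p q i j : Fin 4) :
    ∑ c, ∑ d, eps4 p q c d * κ i j c d = ∑ c, ∑ d, eps4 i j c d * κ p q c d := by
  have h := hs (basisForm p q) (basisForm i j) (isAlt_basisForm p q) (isAlt_basisForm i j)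
  rw [act_basisForm hκ, act_basisForm hκ, wedge2_comm (κ p q), wedge2_basisForm,
    wedge2_basisForm] at h
  linarith

-- `act η ∘ act κ` acts on 2-forms through the tensor `contract κ η`.
def contract (κ η : Fin 4 → Fin 4 → Fin 4 → Fin 4 → ℝ) (p q i j : Fin 4) : ℝ :=
  (1 / 2) * ∑ r, ∑ s, κ p q r s * η r s i j

theorem contract_self_eq_neg_basisForm (hκ : IsMedium κ)
    (hsq : ∀ F, IsAlt F → ∀ i j, act κ (act κ F) i j = - F i j) : contract κ κ = -basisForm := by
  ext p q i j
  have h := hsq (basisForm p q) (isAlt_basisForm p q) i j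
  rw [act_basisForm hκ, act] at h
  simp only [contract, Pi.neg_apply, ← h, mul_comm (κ p q _ _)]

theorem matC_neg_basisForm : matC (-basisForm) = -1 := by
  ext r i
  simp [matC, basisForm, Matrix.one_apply, Fin.succ_ne_zero, eq_comm]

theorem matA_neg_basisForm : matA (-basisForm) = 0 := by
  ext r i
  simp [matA, basisForm, Fin.succ_ne_zero]

theorem matC_contract (hκ : IsMedium κ) (hη : IsMedium η) :
    matC (contract κ η) = matC κ * matC η + matA κ * matB η := by
  ext r i
  have hsplit := sum_fin_four_mul_of_isAlt (u := κ r.succ 0) (v := fun x y => η x y i.succ 0)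
    (hκ.2 _ _) (fun x y => hη.1 x y _ _)
  have hdual := sum_dual_mul_dual (u := fun a b => κ r.succ 0 a.succ b.succ)
    (v := fun a b => η a.succ b.succ i.succ 0) (fun a b => hκ.2 _ _ _ _) (fun a b => hη.1 _ _ _ _)
  simp only [Matrix.add_apply, Matrix.mul_apply, matC, matA, matB, Matrix.of_apply]
  rw [contract, hsplit]
  simp only [neg_mul_neg, mul_mul_mul_comm, ← Finset.mul_sum, hdual]
  ring

theorem matA_contract (hκ : IsMedium κ) (hη : IsMedium η) :
    matA (contract κ η) = matC κ * matA η + matA κ * matD η := by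
  ext r i
  set W : Fin 3 → Fin 3 → ℝ := fun m n => ∑ a, ∑ b, eps3 i a b * η m.succ n.succ a.succ b.succ
  have hsplit : ∀ a b : Fin 3, contract κ η r.succ 0 a.succ b.succ =
      ∑ m : Fin 3, κ r.succ 0 m.succ 0 * η m.succ 0 a.succ b.succ +
        (1 / 2) * ∑ c : Fin 3, ∑ d : Fin 3,
          κ r.succ 0 c.succ d.succ * η c.succ d.succ a.succ b.succ := fun a b => by
    rw [contract, sum_fin_four_mul_of_isAlt (hκ.2 _ _) (fun x y => hη.1 x y _ _)]
    ring
  have hD : ∀ j, matD η j i = (1 / 4) * ∑ m, ∑ n, eps3 j m n * W m n := fun j => by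
    simp only [matD, W, Matrix.of_apply, Finset.mul_sum, mul_assoc]
  have hdual := sum_dual_mul_dual (u := fun a b => κ r.succ 0 a.succ b.succ) (v := W)
    (fun a b => hκ.2 _ _ _ _)
    (fun a b => by simp only [W, hη.1 a.succ, mul_neg, Finset.sum_neg_distrib])
  simp only [Matrix.add_apply, Matrix.mul_apply, hD]
  simp only [matA, matC, Matrix.of_apply, hsplit]
  simp only [neg_mul, mul_mul_mul_comm, Finset.sum_neg_distrib, ← Finset.mul_sum, hdual]
  simp only [W, Fin.sum_univ_three]
  ring

theorem SkewonFree.sum_eps3_mul (hκ : IsMedium κ) (hs : SkewonFree κ) (i m n : Fin 3) :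
    ∑ a, ∑ b, eps3 i a b * κ m.succ n.succ a.succ b.succ =
      2 * ∑ k, eps3 m n k * κ i.succ 0 k.succ 0 := by
  have h := hs.sum_eps4_mul_comm hκ i.succ 0 m.succ n.succ
  have h0 : ∀ k : Fin 3, eps4 i.succ 0 k.succ 0 = 0 := fun k => by simp [eps4]
  rw [sum_fin_four_mul_of_isAlt (fun c d => eps4_swap_right _ _ d c) (hκ.2 _ _),
    sum_fin_four_mul_of_isAlt (fun c d => eps4_swap_right _ _ d c) (hκ.2 _ _)] at h
  simp only [h0, eps4_succ_zero_succ_succ, eps4_succ_succ_succ_zero, eps4_succ_succ_succ_succ,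
    neg_mul, Finset.sum_neg_distrib, zero_mul, Finset.sum_const_zero] at h
  linarith

theorem SkewonFree.matD_eq_transpose_matC (hκ : IsMedium κ) (hs : SkewonFree κ) :
    matD κ = (matC κ)ᵀ := by
  ext r i
  simp only [matD, matC, Matrix.of_apply, Matrix.transpose_apply, mul_assoc, ← Finset.mul_sum,
    hs.sum_eps3_mul hκ]
  fin_cases r <;> fin_cases i <;> simp [Fin.sum_univ_three, eps3] <;> ring

theorem matC_mul_self_add_matA_mul_matB (hκ : IsMedium κ)
    (hsq : ∀ F, IsAlt F → ∀ i j, act κ (act κ F) i j = - F i j) :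
    matC κ * matC κ + matA κ * matB κ = -1 := by
  rw [← matC_contract hκ hκ, contract_self_eq_neg_basisForm hκ hsq, matC_neg_basisForm]

theorem matC_mul_matA_add_matA_mul_transpose (hκ : IsMedium κ) (hs : SkewonFree κ)
    (hsq : ∀ F, IsAlt F → ∀ i j, act κ (act κ F) i j = - F i j) :
    matC κ * matA κ + matA κ * (matC κ)ᵀ = 0 := by
  rw [← hs.matD_eq_transpose_matC hκ, ← matA_contract hκ hκ,
    contract_self_eq_neg_basisForm hκ hsq, matA_neg_basisForm]

end MediumTensor

/-- For a skewon-free medium tensor with `κ ∘ κ = -Id`, the associated 3×3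
matrix `𝒜` is nonzero and does not have rank 2 (so its rank is 1 or 3).  Equivalently,
for real symmetric 3×3 matrices `𝒜 = 𝒜ᵀ`, `ℬ = ℬᵀ` and a matrix `𝒞` satisfying
`𝒞² + 𝒜ℬ = -Id₃`, `ℬ𝒞 + 𝒞ᵀℬ = 0` and `𝒞𝒜 + 𝒜𝒞ᵀ = 0`, the matrix `𝒜` is neither zero
nor of rank 2. -/
theorem matA_rank_one_or_three :
    (∀ κ : Fin 4 → Fin 4 → Fin 4 → Fin 4 → ℝ, IsMedium κ → SkewonFree κ →
      (∀ F, IsAlt F → ∀ i j, act κ (act κ F) i j = - F i j) →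
      matA κ ≠ 0 ∧ (matA κ).rank ≠ 2) ∧
    (∀ A B C : Matrix (Fin 3) (Fin 3) ℝ, A.IsSymm → B.IsSymm →
      C * C + A * B = -1 → B * C + Cᵀ * B = 0 → C * A + A * Cᵀ = 0 →
      A ≠ 0 ∧ A.rank ≠ 2) := by
  refine ⟨fun κ hκ hs hsq => ?_,
    fun A B C _ _ hsq _ hCA => Matrix.ne_zero_and_rank_ne_two hsq hCA⟩
  exact Matrix.ne_zero_and_rank_ne_two (matC_mul_self_add_matA_mul_matB hκ hsq)
    (matC_mul_matA_add_matA_mul_transpose hκ hs hsq)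

end
end
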